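/- arXiv:1709.00329 — 3 statements merged into one kernel-verified Lean document; each statement's English description precedes it below -/
import Mathlib

section
/- If φ is a rational multiple of π and 2cos φ = a/b with a, b coprime integers, b ≠ 0, then b = ±1; consequently cos φ ∈ {0, ±1/2, ±1} (Niven's theorem). -/
/-! `2 cos (q π) = e^{iqπ} + e^{-iqπ}` is a sum of roots of unity, hence an algebraic integer;
being rational it is an integer, so `b ∣ a`, and `|2 cos φ| ≤ 2` leaves five values. -/

open Real

theorem IsIntegral.isUnit_of_eq_intCast_div {α : Type*} [DivisionRing α] [CharZero α] {x : α}
    (hx : IsIntegral ℤ x) {a b : ℤ} (hb : b ≠ 0) (hab : IsCoprime a b) (h : x = a / b) :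
    IsUnit b := by
  obtain ⟨k, hk⟩ := hx.exists_int_iff_exists_rat.mp ⟨a / b, by rw [h]; push_cast; rfl⟩
  have hakb : a = k * b := by
    have hb' : (b : α) ≠ 0 := Int.cast_ne_zero.mpr hb
    exact_mod_cast (div_eq_iff hb').mp (h.symm.trans hk)
  exact hab.symm.isUnit_of_dvd ⟨k, by rw [hakb, mul_comm]⟩

theorem stmt_0 (φ : ℝ) (a b : ℤ) (hrat : ∃ q : ℚ, φ / Real.pi = q)
    (hb : b ≠ 0) (hcop : IsCoprime a b)
    (hcos : 2 * Real.cos φ = (a : ℝ) / (b : ℝ)) :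
    (b = 1 ∨ b = -1) ∧
      (Real.cos φ = 0 ∨ Real.cos φ = 1/2 ∨ Real.cos φ = -(1/2) ∨
        Real.cos φ = 1 ∨ Real.cos φ = -1) := by
  obtain ⟨q, hq⟩ := hrat
  have hφ : φ = q * π := (div_eq_iff pi_ne_zero).mp hq
  have hint : IsIntegral ℤ (2 * cos φ) := hφ ▸ isIntegral_two_mul_cos_rat_mul_pi q
  refine ⟨Int.isUnit_iff.mp (hint.isUnit_of_eq_intCast_div hb hcop hcos), ?_⟩
  have hcos_rat : ∃ r : ℚ, cos φ = r :=
    ⟨a / (2 * b), by push_cast; rw [mul_comm, ← div_div, ← hcos]; ring⟩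
  rcases niven ⟨q, hφ⟩ hcos_rat with h | h | h | h | h <;> norm_num at h <;> simp [h]
end

section
/- For the sequence defined by c_k = 2 cos(2^k φ), if 2 cos φ = a/b with gcd(a,b)=1 and b ≠ ±1, then the denominators of c_k (in lowest terms) are strictly increasing, in fact the denominator of c_{k+1} is the square of the denominator of c_k. -/
/-! The double-angle identity turns `c (k + 1) = 2 cos (2 · 2^k φ)` into `c k ^ 2 - 2`. Squaring
a fraction in lowest terms keeps it in lowest terms and subtracting an integer does not change
the denominator, so the denominator squares at each step; it starts at `|b| ≥ 2`, so it grows. -/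

theorem Real.two_mul_cos_two_mul (x : ℝ) : 2 * cos (2 * x) = (2 * cos x) ^ 2 - 2 := by
  rw [cos_two_mul]
  ring

theorem Rat.den_intCast_div_intCast {a b : ℤ} (hb : b ≠ 0) (h : IsCoprime a b) :
    ((a : ℚ) / b).den = b.natAbs := by
  rw [← Rat.divInt_eq_div, Rat.den_divInt, if_neg hb,
    Int.isCoprime_iff_gcd_eq_one.mp h.symm, Nat.div_one]

theorem Rat.den_sq_sub_two (q : ℚ) : (q ^ 2 - 2).den = q.den ^ 2 := by
  have := Rat.sub_intCast_den (q ^ 2) 2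
  rw [Rat.den_pow] at this
  exact_mod_cast this

theorem Rat.den_eq_den_pow_of_sq_sub_two {q : ℕ → ℚ} (h : ∀ k, q (k + 1) = q k ^ 2 - 2)
    (k : ℕ) : (q k).den = (q 0).den ^ 2 ^ k := by
  induction k with
  | zero => rw [pow_zero, pow_one]
  | succ k ih => rw [h, Rat.den_sq_sub_two, ih, ← pow_mul, pow_succ]

theorem stmt_2 (φ : ℝ) (a b : ℤ) (hb : b ≠ 0) (hcop : IsCoprime a b)
    (hb1 : b ≠ 1) (hb1' : b ≠ -1)
    (c : ℕ → ℚ)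
    (hc : ∀ k : ℕ, (c k : ℝ) = 2 * Real.cos (2 ^ k * φ))
    (h0 : (c 0 : ℝ) = (a : ℝ) / (b : ℝ)) :
    (∀ k : ℕ, (c (k + 1)).den = (c k).den ^ 2) ∧
      StrictMono (fun k => (c k).den) := by
  have hrec : ∀ k, c (k + 1) = c k ^ 2 - 2 := fun k => by
    have : (c (k + 1) : ℝ) = ((c k ^ 2 - 2 : ℚ) : ℝ) := by
      rw [hc, Rat.cast_sub, Rat.cast_pow, hc, pow_succ, mul_comm _ (2 : ℝ), mul_assoc,
        Real.two_mul_cos_two_mul, Rat.cast_ofNat]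
    exact_mod_cast this
  have hden0 : 1 < (c 0).den := by
    have hc0 : c 0 = a / b := by exact_mod_cast h0
    rw [hc0, Rat.den_intCast_div_intCast hb hcop]
    omega
  refine ⟨fun k => by rw [hrec, Rat.den_sq_sub_two], ?_⟩
  rw [show (fun k => (c k).den) = fun k => (c 0).den ^ 2 ^ k from
    funext (Rat.den_eq_den_pow_of_sq_sub_two hrec)]
  exact (pow_right_strictMono₀ hden0).comp (pow_right_strictMono₀ one_lt_two)
end

section
/- If x is a nonzero rational number, then e^x is irrational. -/
/-!
Write `x = m / d`. Since `(e^x)^d = e^m`, it suffices to show that `e^m` is irrational for a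
nonzero integer `m`. Hermite's integrals for the polynomial `X - m` (the analytic part of
Lindemann–Weierstrass) give, for every large prime `p`, integers `n`, `k` with `p ∤ n` and
`|n e^m - p k| ≤ c^p / (p-1)!`. If `e^m = a / b`, then `b (n e^m - p k) = n a - p b k` is an
integer not divisible by `p` once `p > |a|`, hence nonzero, yet smaller than `1` in absolute value
for large `p`.
-/

open Polynomial Filter Topology
open scoped Nat

theorem irrational_of_forall_prime_approx {ξ : ℝ} (hξ : ξ ≠ 0) {ε : ℕ → ℝ}
    (hε : Tendsto ε atTop (𝓝 0)) (N : ℕ)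
    (h : ∀ p > N, p.Prime → ∃ n k : ℤ, ¬ (p : ℤ) ∣ n ∧ |n * ξ - p * k| ≤ ε p) :
    Irrational ξ := by
  rintro ⟨q, rfl⟩
  have hnum : q.num ≠ 0 := Rat.num_ne_zero.mpr (by exact_mod_cast hξ)
  have hsmall : ∀ᶠ p in atTop, q.den * ε p < 1 := by
    have := hε.const_mul (q.den : ℝ)
    rw [mul_zero] at this
    exact this.eventually (eventually_lt_nhds one_pos)
  obtain ⟨M, hM⟩ := eventually_atTop.mp hsmall
  obtain ⟨p, hpM, hp⟩ := Nat.exists_infinite_primes (max M (max N q.num.natAbs) + 1)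
  obtain ⟨n, k, hpn, happrox⟩ := h p (by omega) hp
  have hpnum : ¬ (p : ℤ) ∣ q.num := fun hdvd =>
    hnum (Int.eq_zero_of_dvd_of_natAbs_lt_natAbs hdvd (by rw [Int.natAbs_natCast]; omega))
  set z : ℤ := n * q.num - p * (k * q.den)
  have hz : (z : ℝ) = q.den * (n * q - p * k) := by
    simp only [z, Int.cast_sub, Int.cast_mul, Int.cast_natCast]
    rw [Rat.cast_def]
    field_simp
  have hz0 : z ≠ 0 := by
    intro hz0
    have : (p : ℤ) ∣ n * q.num := ⟨k * q.den, by omega⟩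
    rcases (Nat.prime_iff_prime_int.mp hp).dvd_or_dvd this with h | h
    exacts [hpn h, hpnum h]
  have hz1 : (1 : ℝ) ≤ |(z : ℝ)| := by exact_mod_cast Int.one_le_abs hz0
  rw [hz, abs_mul, Nat.abs_cast] at hz1
  have := mul_le_mul_of_nonneg_left happrox (Nat.cast_nonneg q.den)
  linarith [hM p (by omega)]

theorem exists_approx_exp_intCast {m : ℤ} (hm : m ≠ 0) :
    ∃ c : ℝ, ∀ p > m.natAbs, p.Prime →
      ∃ n k : ℤ, ¬ (p : ℤ) ∣ n ∧ |n * Real.exp m - p * k| ≤ c ^ p / (p - 1)! := by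
  obtain ⟨c, hc⟩ := LindemannWeierstrass.exp_polynomial_approx (X - C m) (by simpa using hm)
  refine ⟨c, fun p hp hprime => ?_⟩
  obtain ⟨n, hpn, gp, -, happrox⟩ := hc p (by simpa using hp) hprime
  refine ⟨n, gp.eval m, hpn, ?_⟩
  have hcast : n • Complex.exp m - p • aeval (m : ℂ) gp
      = ((n * Real.exp m - p * gp.eval m : ℝ) : ℂ) := by
    push_cast
    rw [zsmul_eq_mul, nsmul_eq_mul, ← eq_intCast (algebraMap ℤ ℂ) m,
      aeval_algebraMap_apply_eq_algebraMap_eval, eq_intCast, eq_intCast]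
  have := happrox (r := m) (by rw [aroots_X_sub_C]; simp)
  rwa [hcast, Complex.norm_real, Real.norm_eq_abs] at this

theorem irrational_exp_intCast {m : ℤ} (hm : m ≠ 0) : Irrational (Real.exp m) := by
  obtain ⟨c, hc⟩ := exists_approx_exp_intCast hm
  have hε := FloorSemiring.tendsto_mul_pow_div_factorial_sub_atTop 1 c 1
  simp only [one_mul] at hε
  exact irrational_of_forall_prime_approx (Real.exp_pos _).ne' hε _ hc

theorem stmt_16 (x : ℚ) (hx : x ≠ 0) : Irrational (Real.exp x) := by
  refine Irrational.of_pow x.den ?_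
  rw [← Real.exp_nat_mul]
  convert irrational_exp_intCast (Rat.num_ne_zero.mpr hx)
  exact_mod_cast x.den_mul_eq_num
end
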